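/- arXiv:1912.00171 — 3 statements merged into one kernel-verified Lean document; each statement's English description precedes it below -/
import Mathlib

section
/- The number of arrangements of m pebbles (linear orders on subsets of [m]) is at most 2^m · m!, and if a feasible transition sequence of a PIA contains two indices h₁ < h₂ with equal transitions t_{h₁} = t_{h₂} and equal arrangements O_{h₁} = O_{h₂}, then the sequence obtained by deleting the segment between them (keeping t₁,…,t_{h₁}, t_{h₂+1},…,t_r) is also feasible and ends in the same state. -/
/-- A pebble-intervals automaton (PIA): alphabet `α`, `m` pebbles, states `Q`,
initial state `qinit`, accepting states `F`, silent transitions `silent` and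
move transitions `move q k i j a q'` where `i = none` denotes the left boundary ▷
and `j = none` denotes the right boundary ◁. -/
structure PIA (α : Type) where
  m : ℕ
  Q : Type
  qinit : Q
  F : Set Q
  silent : Q → Q → Prop
  move : Q → Fin m → Option (Fin m) → Option (Fin m) → α → Q → Prop

/-- A configuration of a PIA on a string of length `n`: current state, pebble
assignment, and set of already-read positions. -/
structure PIAConfig {α : Type} (A : PIA α) (n : ℕ) where
  q : A.Q
  ρ : Fin A.m → Option (Fin n)
  N : Set (Fin n)

/-- Pebble `i` (or the left boundary, if `i = none`) lies strictly left of `ℓ`. -/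
def leftOK {m n : ℕ} (ρ : Fin m → Option (Fin n)) (i : Option (Fin m)) (ℓ : Fin n) : Prop :=
  match i with
  | none => True
  | some p => ∃ pi, ρ p = some pi ∧ pi < ℓ

/-- Pebble `j` (or the right boundary, if `j = none`) lies strictly right of `ℓ`. -/
def rightOK {m n : ℕ} (ρ : Fin m → Option (Fin n)) (j : Option (Fin m)) (ℓ : Fin n) : Prop :=
  match j with
  | none => True
  | some p => ∃ pj, ρ p = some pj ∧ ℓ < pj

/-- One step of a PIA on input `u`: either a silent transition, or a move
transition placing pebble `k` on an unread position strictly between `i` and `j`,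
reading the letter there. -/
def PIAStep {α : Type} (A : PIA α) {n : ℕ} (u : Fin n → α)
    (c c' : PIAConfig A n) : Prop :=
  (A.silent c.q c'.q ∧ c'.ρ = c.ρ ∧ c'.N = c.N) ∨
  (∃ (k : Fin A.m) (i j : Option (Fin A.m)) (ℓ : Fin n),
    A.move c.q k i j (u ℓ) c'.q ∧ ℓ ∉ c.N ∧
    leftOK c.ρ i ℓ ∧ rightOK c.ρ j ℓ ∧
    c'.ρ = Function.update c.ρ k (some ℓ) ∧ c'.N = insert ℓ c.N)

/-- The initial configuration: initial state, no pebbles placed, nothing read. -/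
def PIAInit {α : Type} (A : PIA α) (n : ℕ) : PIAConfig A n :=
  ⟨A.qinit, fun _ => none, ∅⟩

/-- A PIA accepts a string `u` if some computation from the initial configuration
reads all positions of `u` and ends in an accepting state. -/
def PIA.Accepts {α : Type} (A : PIA α) (u : List α) : Prop :=
  ∃ c : PIAConfig A u.length,
    Relation.ReflTransGen (PIAStep A u.get) (PIAInit A u.length) c ∧
    c.q ∈ A.F ∧ c.N = Set.univ

/-- A transition of a PIA: either silent or a move transition, together with
its source and target states. -/
inductive PTrans {α : Type} (A : PIA α) : Type
  | silent (q q' : A.Q)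
  | move (q : A.Q) (k : Fin A.m) (i j : Option (Fin A.m)) (a : α) (q' : A.Q)

/-- Membership of a transition in the transition relation `δ` of the PIA. -/
def PTransMem {α : Type} (A : PIA α) : PTrans A → Prop
  | .silent q q' => A.silent q q'
  | .move q k i j a q' => A.move q k i j a q'

/-- `InsertBetween k i j O O'`: the arrangement `O'` (a linear order on a subset
of the pebbles, represented as a list) is obtained from `O` by removing pebble
`k` and re-inserting it strictly between pebble `i` (or the left boundary, if
`i = none`) and pebble `j` (or the right boundary, if `j = none`), preserving
the relative order of all other pebbles. -/
def InsertBetween {m : ℕ} (k : Fin m) (i j : Option (Fin m))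
    (O O' : List (Fin m)) : Prop :=
  ∃ l₁ l₂ : List (Fin m), O.erase k = l₁ ++ l₂ ∧ O' = l₁ ++ k :: l₂ ∧
    (∀ p, i = some p → p ∈ l₁) ∧ (∀ p, j = some p → p ∈ l₂)

/-- `FeasSeq A q O ts q' O'`: the sequence of transitions `ts` is feasible from
state `q` and arrangement `O`, ending in state `q'` and arrangement `O'`:
silent transitions preserve the arrangement, and each move transition
`move(k; i, j)` inserts `k` strictly between `i` and `j`. -/
inductive FeasSeq {α : Type} (A : PIA α) :
    A.Q → List (Fin A.m) → List (PTrans A) → A.Q → List (Fin A.m) → Prop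
  | nil (q : A.Q) (O : List (Fin A.m)) : FeasSeq A q O [] q O
  | silent {q q' q'' : A.Q} {O O'' : List (Fin A.m)} {ts : List (PTrans A)} :
      A.silent q q' → FeasSeq A q' O ts q'' O'' →
      FeasSeq A q O (PTrans.silent q q' :: ts) q'' O''
  | move {q q' q'' : A.Q} {k : Fin A.m} {i j : Option (Fin A.m)} {a : α}
      {O O' O'' : List (Fin A.m)} {ts : List (PTrans A)} :
      A.move q k i j a q' → InsertBetween k i j O O' →
      FeasSeq A q' O' ts q'' O'' →
      FeasSeq A q O (PTrans.move q k i j a q' :: ts) q'' O''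

/-- A step of the PIA performing a specific transition `t`. -/
def PIAStepT {α : Type} (A : PIA α) {n : ℕ} (u : Fin n → α) :
    PTrans A → PIAConfig A n → PIAConfig A n → Prop
  | .silent q q', c, c' =>
      A.silent q q' ∧ c.q = q ∧ c'.q = q' ∧ c'.ρ = c.ρ ∧ c'.N = c.N
  | .move q k i j a q', c, c' =>
      A.move q k i j a q' ∧ c.q = q ∧ c'.q = q' ∧
      ∃ ℓ : Fin n, u ℓ = a ∧ ℓ ∉ c.N ∧ leftOK c.ρ i ℓ ∧ rightOK c.ρ j ℓ ∧
        c'.ρ = Function.update c.ρ k (some ℓ) ∧ c'.N = insert ℓ c.N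

/-- `RunSeq A u c ts c'`: the sequence of transitions `ts` together with the
induced sequence of configurations forms a computation of `A` on `u` from `c`
to `c'`. -/
inductive RunSeq {α : Type} (A : PIA α) {n : ℕ} (u : Fin n → α) :
    PIAConfig A n → List (PTrans A) → PIAConfig A n → Prop
  | nil (c : PIAConfig A n) : RunSeq A u c [] c
  | cons {c c' c'' : PIAConfig A n} {t : PTrans A} {ts : List (PTrans A)} :
      PIAStepT A u t c c' → RunSeq A u c' ts c'' → RunSeq A u c (t :: ts) c''

/-! An arrangement is a subset `s` of the pebbles together with one of the `|s|! ≤ m!` orderings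
of `s`, whence the bound. Feasibility of a sequence depends only on the state and arrangement
it starts from, so feasible sequences compose; cutting out a segment that returns to the same
state and arrangement therefore preserves feasibility. -/

open Finset Nat

theorem List.Nodup.mem_permutations_toFinset_toList {β : Type*} [DecidableEq β] {l : List β}
    (hl : l.Nodup) : l ∈ l.toFinset.toList.permutations :=
  List.mem_permutations.2 (List.toFinset_toList hl).symm

theorem card_nodup_list_le {β : Type*} [Fintype β] [DecidableEq β] :
    Nat.card {l : List β // l.Nodup} ≤ 2 ^ Fintype.card β * (Fintype.card β)! := by
  let S : Finset (List β) := univ.powerset.biUnion fun s => s.toList.permutations.toFinset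
  have mem_S (l : {l : List β // l.Nodup}) : l.1 ∈ S :=
    mem_biUnion.2 ⟨l.1.toFinset, mem_powerset.2 (subset_univ _),
      List.mem_toFinset.2 l.2.mem_permutations_toFinset_toList⟩
  calc Nat.card {l : List β // l.Nodup}
      ≤ Nat.card S := Nat.card_le_card_of_injective (fun l => ⟨l.1, mem_S l⟩)
        fun _ _ h => Subtype.ext (congrArg Subtype.val h :)
    _ = S.card := Nat.card_eq_finsetCard S
    _ ≤ ∑ s ∈ univ.powerset, s.toList.permutations.toFinset.card := card_biUnion_le
    _ ≤ ∑ _s ∈ (univ : Finset β).powerset, (Fintype.card β)! := sum_le_sum fun s _ => by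
        calc s.toList.permutations.toFinset.card ≤ s.toList.permutations.length :=
              List.toFinset_card_le _
          _ = s.card ! := by rw [List.length_permutations, length_toList]
          _ ≤ (Fintype.card β)! := factorial_le (card_le_univ s)
    _ = 2 ^ Fintype.card β * (Fintype.card β)! := by
        rw [sum_const, card_powerset, Finset.card_univ, smul_eq_mul]

theorem FeasSeq.append {α : Type} {A : PIA α} {q q' q'' : A.Q} {O O' O'' : List (Fin A.m)}
    {ts ts' : List (PTrans A)} (h : FeasSeq A q O ts q' O') (h' : FeasSeq A q' O' ts' q'' O'') :
    FeasSeq A q O (ts ++ ts') q'' O'' := by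
  induction h with
  | nil => exact h'
  | silent hs _ ih => exact .silent hs (ih h')
  | move hm hins _ ih => exact .move hm hins (ih h')

/-- The number of arrangements of `m` pebbles (linear orders on subsets of
`[m]`, i.e. duplicate-free lists over `Fin m`) is at most `2^m · m!`; and if a
feasible transition sequence passes twice through the same state and
arrangement (in particular after two occurrences of an equal transition with
equal arrangements), then deleting the segment between the two occurrences
yields a feasible sequence ending in the same state and arrangement. -/
theorem arrangements_card_and_feasible_deletion {α : Type} (m : ℕ) :
    (Nat.card {l : List (Fin m) // l.Nodup} ≤ 2 ^ m * Nat.factorial m) ∧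
    (∀ (A : PIA α) (q : A.Q) (O : List (Fin A.m))
        (ts₁ ts₂ ts₃ : List (PTrans A)) (q₁ : A.Q) (O₁ : List (Fin A.m))
        (q₃ : A.Q) (O₃ : List (Fin A.m)),
      FeasSeq A q O ts₁ q₁ O₁ →
      FeasSeq A q₁ O₁ ts₂ q₁ O₁ →
      FeasSeq A q₁ O₁ ts₃ q₃ O₃ →
      FeasSeq A q O (ts₁ ++ ts₃) q₃ O₃) := by
  refine ⟨?_, fun A q O ts₁ ts₂ ts₃ q₁ O₁ q₃ O₃ h₁ _ h₃ => h₁.append h₃⟩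
  simpa only [Fintype.card_fin] using card_nodup_list_le (β := Fin m)
end

section
/- Let T be a D-task word, and let d, d' be universe elements with the same 1-type such that d ≤₁ d' and d ∼₂ d' in D, assigned task sets ts_d and ts_{d'} realizing the same witness type set ω. Then for every 2-type θ ∈ ω: (1) if θ(x,y) ⊨ x ≤₁ y and C_θ ∈ ts_{d'}, then C_θ ∈ ts_d; and (2) if θ(x,y) ⊨ y ≤₁ x and C_θ ∈ ts_d, then C_θ ∈ ts_{d'}. -/
/-- A data word over the alphabet `α`: a finite universe `D` with a linear
order `≤₁`, a total preorder `≲₂`, and a letter (unary relation of the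
partition) attached to each element. -/
structure DataWord (α : Type) where
  D : Type
  finD : Finite D
  le1 : D → D → Prop
  le2 : D → D → Prop
  letter : D → α
  le1_trans : ∀ a b c, le1 a b → le1 b c → le1 a c
  le1_antisymm : ∀ a b, le1 a b → le1 b a → a = b
  le1_total : ∀ a b, le1 a b ∨ le1 b a
  le2_trans : ∀ a b c, le2 a b → le2 b c → le2 a c
  le2_total : ∀ a b, le2 a b ∨ le2 b a

namespace DataWord

variable {α : Type}

/-- Strict linear order `<₁`. -/
def lt1 (W : DataWord α) (a b : W.D) : Prop := W.le1 a b ∧ a ≠ b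

/-- Strict part `⋨₂` of the total preorder. -/
def lt2 (W : DataWord α) (a b : W.D) : Prop := W.le2 a b ∧ ¬ W.le2 b a

/-- Equivalence `∼₂` induced by the total preorder. -/
def sim2 (W : DataWord α) (a b : W.D) : Prop := W.le2 a b ∧ W.le2 b a

/-- The successor relation `S₂` induced by `≲₂`: `S₂ a b` iff `a ≲₂ b` and
there is no `z` with `a ⋨₂ z ⋨₂ b`. -/
def S2 (W : DataWord α) (a b : W.D) : Prop :=
  W.le2 a b ∧ ¬ ∃ z, W.lt2 a z ∧ W.lt2 z b

/-- The data value of `d`: the number of `∼₂`-equivalence classes all of whose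
elements are `≲₂ d`. -/
noncomputable def val (W : DataWord α) (d : W.D) : ℕ :=
  Set.ncard {E : Set W.D | (∃ a, E = {b | W.sim2 a b}) ∧ ∀ e ∈ E, W.le2 e d}

/-- The maximal data value of the data word. -/
noncomputable def maxVal (W : DataWord α) : ℕ := sSup (Set.range W.val)

/-- The induced sub-data-word on a subset of the universe. -/
def restrict (W : DataWord α) (P : Set W.D) : DataWord α where
  D := P
  finD := by have := W.finD; exact Subtype.finite
  le1 := fun a b => W.le1 a b
  le2 := fun a b => W.le2 a b
  letter := fun a => W.letter a
  le1_trans := fun a b c hab hbc => W.le1_trans a b c hab hbc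
  le1_antisymm := fun a b hab hba => Subtype.ext (W.le1_antisymm a b hab hba)
  le1_total := fun a b => W.le1_total a b
  le2_trans := fun a b c hab hbc => W.le2_trans a b c hab hbc
  le2_total := fun a b => W.le2_total a b

/-- The trimming `D↾₁` of a data word: the induced sub-data-word on the
elements of non-maximal data value. -/
noncomputable def trim (W : DataWord α) : DataWord α :=
  W.restrict {d | W.val d ≠ W.maxVal}

end DataWord

/-- An (abstract) 2-type over data words: letters of `x` and `y`, the relative
position in the linear order `≤₁` (`lt`: `x <₁ y`, `eq`: `x = y`, `gt`:
`y <₁ x`), the relative position in the preorder `≲₂` (`lt`: `x ⋨₂ y`, `eq`: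
`x ∼₂ y`, `gt`: `y ⋨₂ x`), and whether `S₂(x,y)` and `S₂(y,x)` hold. -/
structure TwoType (α : Type) where
  ξx : α
  ξy : α
  ord1 : Ordering
  ord2 : Ordering
  sxy : Bool
  syx : Bool

/-- The 2-type `θ` holds of the pair `(x, y)` in the data word `W`. -/
def TwoType.holds {α : Type} (θ : TwoType α) (W : DataWord α) (x y : W.D) : Prop :=
  W.letter x = θ.ξx ∧ W.letter y = θ.ξy ∧
  (match θ.ord1 with
    | .lt => W.lt1 x y
    | .eq => x = y
    | .gt => W.lt1 y x) ∧
  (match θ.ord2 with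
    | .lt => W.lt2 x y
    | .eq => W.sim2 x y
    | .gt => W.lt2 y x) ∧
  (W.S2 x y ↔ θ.sxy = true) ∧ (W.S2 y x ↔ θ.syx = true)

/-- A `D`-task word over a data word `W`: each element `d` carries a witness
type set `ω d` (the set of 2-types of its task set) and the set `completed d`
of 2-types `θ` whose task `C_θ` is completed; `θ ∈ completed d` iff `d` has a
`θ`-witness in `W`, and every `θ ∈ ω d` forces the letter of `d`. -/
structure TaskWord {α : Type} (W : DataWord α) where
  ω : W.D → Set (TwoType α)
  completed : W.D → Set (TwoType α)
  comp_sub : ∀ d, completed d ⊆ ω d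
  comp_iff : ∀ d θ, θ ∈ ω d → (θ ∈ completed d ↔ ∃ y, θ.holds W d y)
  letter_ok : ∀ d θ, θ ∈ ω d → θ.ξx = W.letter d

namespace DataWord
variable {α : Type} (W : DataWord α)

lemma le2_refl (a : W.D) : W.le2 a a := by rcases W.le2_total a a with h | h <;> exact h

lemma sim_le2_left {a b : W.D} (h : W.sim2 a b) (z : W.D) : W.le2 a z ↔ W.le2 b z :=
  ⟨fun hz => W.le2_trans _ _ _ h.2 hz, fun hz => W.le2_trans _ _ _ h.1 hz⟩

lemma sim_le2_right {a b : W.D} (h : W.sim2 a b) (z : W.D) : W.le2 z a ↔ W.le2 z b :=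
  ⟨fun hz => W.le2_trans _ _ _ hz h.1, fun hz => W.le2_trans _ _ _ hz h.2⟩

lemma sim_lt2_left {a b : W.D} (h : W.sim2 a b) (z : W.D) : W.lt2 a z ↔ W.lt2 b z := by
  unfold lt2; rw [sim_le2_left W h, sim_le2_right W h]

lemma sim_lt2_right {a b : W.D} (h : W.sim2 a b) (z : W.D) : W.lt2 z a ↔ W.lt2 z b := by
  unfold lt2; rw [sim_le2_left W h, sim_le2_right W h]

lemma sim_sim2_left {a b : W.D} (h : W.sim2 a b) (z : W.D) : W.sim2 a z ↔ W.sim2 b z := by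
  unfold sim2; rw [sim_le2_left W h, sim_le2_right W h]

lemma sim_S2_left {a b : W.D} (h : W.sim2 a b) (z : W.D) : W.S2 a z ↔ W.S2 b z := by
  unfold S2
  rw [sim_le2_left W h]
  constructor <;> rintro ⟨h1, h2⟩ <;> refine ⟨h1, fun ⟨w, hw1, hw2⟩ => h2 ⟨w, ?_, hw2⟩⟩
  · exact (sim_lt2_left W h w).mpr hw1
  · exact (sim_lt2_left W h w).mp hw1

lemma sim_S2_right {a b : W.D} (h : W.sim2 a b) (z : W.D) : W.S2 z a ↔ W.S2 z b := by
  unfold S2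
  rw [sim_le2_right W h]
  constructor <;> rintro ⟨h1, h2⟩ <;> refine ⟨h1, fun ⟨w, hw1, hw2⟩ => h2 ⟨w, hw1, ?_⟩⟩
  · exact (sim_lt2_right W h w).mpr hw2
  · exact (sim_lt2_right W h w).mp hw2

end DataWord

/-- Lemma (witnesses of task completion, task-word version): in a `D`-task word,
for elements `d ≤₁ d'` with `d ∼₂ d'`, the same 1-type, and task sets realizing
the same witness type set, and any 2-type `θ` in that witness type set:
if `θ(x,y) ⊨ x ≤₁ y` and `C_θ` is completed at `d'` then it is completed at `d`,
and if `θ(x,y) ⊨ y ≤₁ x` and `C_θ` is completed at `d` then it is completed at `d'`. -/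
theorem taskword_completion_transfer {α : Type} (W : DataWord α)
    (T : TaskWord W) (d d' : W.D)
    (h1t : W.letter d = W.letter d')
    (hle : W.le1 d d') (hsim : W.sim2 d d')
    (hω : T.ω d = T.ω d') (θ : TwoType α) (hθ : θ ∈ T.ω d) :
    (θ.ord1 ≠ Ordering.gt → θ ∈ T.completed d' → θ ∈ T.completed d) ∧
    (θ.ord1 ≠ Ordering.lt → θ ∈ T.completed d → θ ∈ T.completed d') := by
  have hsim' : W.sim2 d' d := ⟨hsim.2, hsim.1⟩
  have hθ' : θ ∈ T.ω d' := hω ▸ hθ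
  have hξx : θ.ξx = W.letter d := T.letter_ok d θ hθ
  constructor
  · intro hne hc
    rw [T.comp_iff d' θ hθ'] at hc
    obtain ⟨y, hy1, hy2, hy3, hy4, hy5, hy6⟩ := hc
    rw [T.comp_iff d θ hθ]
    match ho : θ.ord1 with
    | .gt => exact absurd ho hne
    | .lt =>
      rw [ho] at hy3
      refine ⟨y, by rw [hξx], hy2, ?_, ?_, ?_, ?_⟩
      · rw [ho]
        refine ⟨W.le1_trans _ _ _ hle hy3.1, fun he => hy3.2 ?_⟩
        subst he
        exact W.le1_antisymm _ _ hy3.1 hle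
      · match ho2 : θ.ord2 with
        | .lt => rw [ho2] at hy4; exact (W.sim_lt2_left hsim y).mpr hy4
        | .eq => rw [ho2] at hy4; exact (W.sim_sim2_left hsim y).mpr hy4
        | .gt => rw [ho2] at hy4; exact (W.sim_lt2_right hsim y).mpr hy4
      · rw [W.sim_S2_left hsim y]; exact hy5
      · rw [W.sim_S2_right hsim y]; exact hy6
    | .eq =>
      rw [ho] at hy3
      subst hy3
      refine ⟨d, by rw [hξx], by rw [h1t, hy2], ?_, ?_, ?_, ?_⟩
      · rw [ho]
      · match ho2 : θ.ord2 with
        | .lt => rw [ho2] at hy4; exact absurd hy4.1 hy4.2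
        | .eq => exact ⟨W.le2_refl d, W.le2_refl d⟩
        | .gt => rw [ho2] at hy4; exact absurd hy4.1 hy4.2
      · rw [W.sim_S2_left hsim d, W.sim_S2_right hsim d']; exact hy5
      · rw [W.sim_S2_left hsim d, W.sim_S2_right hsim d']; exact hy6
  · intro hne hc
    rw [T.comp_iff d θ hθ] at hc
    obtain ⟨y, hy1, hy2, hy3, hy4, hy5, hy6⟩ := hc
    rw [T.comp_iff d' θ hθ']
    match ho : θ.ord1 with
    | .lt => exact absurd ho hne
    | .gt =>
      rw [ho] at hy3
      refine ⟨y, by rw [hξx, h1t], hy2, ?_, ?_, ?_, ?_⟩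
      · rw [ho]
        refine ⟨W.le1_trans _ _ _ hy3.1 hle, fun he => hy3.2 ?_⟩
        subst he
        exact W.le1_antisymm _ _ hy3.1 hle
      · match ho2 : θ.ord2 with
        | .lt => rw [ho2] at hy4; exact (W.sim_lt2_left hsim' y).mpr hy4
        | .eq => rw [ho2] at hy4; exact (W.sim_sim2_left hsim' y).mpr hy4
        | .gt => rw [ho2] at hy4; exact (W.sim_lt2_right hsim' y).mpr hy4
      · rw [W.sim_S2_left hsim' y]; exact hy5
      · rw [W.sim_S2_right hsim' y]; exact hy6
    | .eq =>
      rw [ho] at hy3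
      subst hy3
      refine ⟨d', by rw [hξx, h1t], by rw [← h1t, hy2], ?_, ?_, ?_, ?_⟩
      · rw [ho]
      · match ho2 : θ.ord2 with
        | .lt => rw [ho2] at hy4; exact absurd hy4.1 hy4.2
        | .eq => exact ⟨W.le2_refl d', W.le2_refl d'⟩
        | .gt => rw [ho2] at hy4; exact absurd hy4.1 hy4.2
      · rw [W.sim_S2_left hsim' d', W.sim_S2_right hsim' d]; exact hy5
      · rw [W.sim_S2_left hsim' d', W.sim_S2_right hsim' d]; exact hy6
end

section
/- Let D be a data word and let d, d' be elements with the same 1-type such that d ≤₁ d' and d ∼₂ d'. Let θ be a 2-type with θ(x,y) ⊨ x ≤₁ y. If D ⊨ ∃y θ(d', y), then D ⊨ ∃y θ(d, y). Symmetrically, if θ(x,y) ⊨ y ≤₁ x and D ⊨ ∃y θ(d, y), then D ⊨ ∃y θ(d', y). -/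
/-- Lemma: in a data word, for elements `d ≤₁ d'` with the same 1-type and
`d ∼₂ d'`, and any 2-type `θ`: if `θ(x,y) ⊨ x ≤₁ y` and `d'` has a `θ`-witness
then so does `d`; symmetrically, if `θ(x,y) ⊨ y ≤₁ x` and `d` has a `θ`-witness
then so does `d'`. -/
theorem witness_transfer_same_class {α : Type} (W : DataWord α) (d d' : W.D)
    (h1t : W.letter d = W.letter d')
    (hle : W.le1 d d') (hsim : W.sim2 d d') (θ : TwoType α) :
    (θ.ord1 ≠ Ordering.gt → (∃ y, θ.holds W d' y) → ∃ y, θ.holds W d y) ∧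
    (θ.ord1 ≠ Ordering.lt → (∃ y, θ.holds W d y) → ∃ y, θ.holds W d' y) := by
  obtain ⟨hdd', hd'd⟩ := hsim
  have le2refl : ∀ a : W.D, W.le2 a a := fun a => (W.le2_total a a).elim id id
  have hlt2l : ∀ y, W.lt2 d y ↔ W.lt2 d' y := by
    intro y; constructor
    · rintro ⟨h1, h2⟩
      exact ⟨W.le2_trans _ _ _ hd'd h1, fun h => h2 (W.le2_trans _ _ _ h hd'd)⟩
    · rintro ⟨h1, h2⟩
      exact ⟨W.le2_trans _ _ _ hdd' h1, fun h => h2 (W.le2_trans _ _ _ h hdd')⟩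
  have hlt2r : ∀ y, W.lt2 y d ↔ W.lt2 y d' := by
    intro y; constructor
    · rintro ⟨h1, h2⟩
      exact ⟨W.le2_trans _ _ _ h1 hdd', fun h => h2 (W.le2_trans _ _ _ hdd' h)⟩
    · rintro ⟨h1, h2⟩
      exact ⟨W.le2_trans _ _ _ h1 hd'd, fun h => h2 (W.le2_trans _ _ _ hd'd h)⟩
  have hsimr : ∀ y, W.sim2 d y ↔ W.sim2 d' y := by
    intro y; constructor
    · rintro ⟨h1, h2⟩; exact ⟨W.le2_trans _ _ _ hd'd h1, W.le2_trans _ _ _ h2 hdd'⟩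
    · rintro ⟨h1, h2⟩; exact ⟨W.le2_trans _ _ _ hdd' h1, W.le2_trans _ _ _ h2 hd'd⟩
  have hS2l : ∀ y, W.S2 d y ↔ W.S2 d' y := by
    intro y; constructor
    · rintro ⟨h1, h2⟩
      exact ⟨W.le2_trans _ _ _ hd'd h1,
        fun ⟨z, hz1, hz2⟩ => h2 ⟨z, (hlt2l z).2 hz1, hz2⟩⟩
    · rintro ⟨h1, h2⟩
      exact ⟨W.le2_trans _ _ _ hdd' h1,
        fun ⟨z, hz1, hz2⟩ => h2 ⟨z, (hlt2l z).1 hz1, hz2⟩⟩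
  have hS2r : ∀ y, W.S2 y d ↔ W.S2 y d' := by
    intro y; constructor
    · rintro ⟨h1, h2⟩
      exact ⟨W.le2_trans _ _ _ h1 hdd',
        fun ⟨z, hz1, hz2⟩ => h2 ⟨z, hz1, (hlt2r z).2 hz2⟩⟩
    · rintro ⟨h1, h2⟩
      exact ⟨W.le2_trans _ _ _ h1 hd'd,
        fun ⟨z, hz1, hz2⟩ => h2 ⟨z, hz1, (hlt2r z).1 hz2⟩⟩
  have hord2 : ∀ y,
      ((match θ.ord2 with
        | .lt => W.lt2 d y
        | .eq => W.sim2 d y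
        | .gt => W.lt2 y d) ↔
       (match θ.ord2 with
        | .lt => W.lt2 d' y
        | .eq => W.sim2 d' y
        | .gt => W.lt2 y d')) := by
    intro y
    cases θ.ord2
    · exact hlt2l y
    · exact hsimr y
    · exact hlt2r y
  have hS2refl : ∀ a : W.D, W.S2 a a :=
    fun a => ⟨le2refl a, fun ⟨z, ⟨_, hz2⟩, ⟨hz3, _⟩⟩ => hz2 hz3⟩
  constructor
  · rintro hne ⟨y, hx, hyy, ho1, ho2, hs1, hs2⟩
    match h : θ.ord1 with
    | .gt => exact absurd h hne
    | .eq =>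
      rw [h] at ho1
      subst ho1
      refine ⟨d, h1t.trans hx, ?_, ?_, ?_, ?_, ?_⟩
      · exact h1t.trans hyy
      · rw [h]
      · revert ho2
        cases θ.ord2
        · rintro ⟨h1, h2⟩; exact absurd h1 h2
        · intro _; exact ⟨le2refl d, le2refl d⟩
        · rintro ⟨h1, h2⟩; exact absurd h1 h2
      · exact ⟨fun _ => hs1.1 (hS2refl d'), fun _ => hS2refl d⟩
      · exact ⟨fun _ => hs2.1 (hS2refl d'), fun _ => hS2refl d⟩
    | .lt =>
      rw [h] at ho1
      obtain ⟨hle1, hne1⟩ := ho1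
      refine ⟨y, h1t.trans hx, hyy, ?_, (hord2 y).2 ho2,
        (hS2l y).trans hs1, (hS2r y).trans hs2⟩
      rw [h]
      refine ⟨W.le1_trans _ _ _ hle hle1, fun hdy => ?_⟩
      subst hdy
      exact hne1 (W.le1_antisymm _ _ hle hle1).symm
  · rintro hne ⟨y, hx, hyy, ho1, ho2, hs1, hs2⟩
    match h : θ.ord1 with
    | .lt => exact absurd h hne
    | .eq =>
      rw [h] at ho1
      subst ho1
      refine ⟨d', h1t.symm.trans hx, h1t.symm.trans hyy, ?_, ?_, ?_, ?_⟩
      · rw [h]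
      · revert ho2
        cases θ.ord2
        · rintro ⟨h1, h2⟩; exact absurd h1 h2
        · intro _; exact ⟨le2refl d', le2refl d'⟩
        · rintro ⟨h1, h2⟩; exact absurd h1 h2
      · exact ⟨fun _ => hs1.1 (hS2refl d), fun _ => hS2refl d'⟩
      · exact ⟨fun _ => hs2.1 (hS2refl d), fun _ => hS2refl d'⟩
    | .gt =>
      rw [h] at ho1
      obtain ⟨hle1, hne1⟩ := ho1
      refine ⟨y, h1t.symm.trans hx, hyy, ?_, (hord2 y).1 ho2,
        ((hS2l y).symm.trans hs1 : _), ((hS2r y).symm.trans hs2 : _)⟩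
      rw [h]
      refine ⟨W.le1_trans _ _ _ hle1 hle, fun hyd => ?_⟩
      subst hyd
      exact hne1 (W.le1_antisymm _ _ hle1 hle)
end
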